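/- arXiv:2204.13866 — 3 statements merged into one kernel-verified Lean document; each statement's English description precedes it below -/
import Mathlib

section
/- Fix constants 0 < b < √(2π) and a, c, T > 0. There exists ε₀ > 0 (depending only on b, c and T) such that for all ε ∈ (0, ε₀) the following holds: if f : [0,T] → [0,∞) is a function such that for all t ∈ [0,T], f(t) ≤ a + (b²/log(ε⁻¹)) ∫₀ᵗ f(s) · min(1/(4π(t−s)), c/ε²) ds, then f(t) ≤ a·C for all t ∈ [0,T], where C > 0 is a constant depending only on b. -/
/-!
On `[0, T]` the kernel `k u = min (4πu)⁻¹ (c/ε²)` has mass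
`∫₀ᵀ k ≤ (1 + log⁺ (4πcT/ε²))/(4π) = (2 log ε⁻¹ + O(1))/(4π)`, so `θ := (b²/log ε⁻¹) ∫₀ᵀ k`
tends to `b²/(2π) < 1` as `ε → 0`; choose `ε₀` so that `θ ≤ (1 + b²/(2π))/2`.
The supremum `M` of `f` on `[0, t]` then satisfies `M ≤ a + θ M`, so `f ≤ a/(1 - θ)`.
`M` is finite because `k` is bounded above and below on `(0, T]`: integrability of `f · k(t - ·)`
gives that of `f`, and the inequality then bounds `f` on `[0, t]` by a multiple of `1 + ∫₀ᵗ f`.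
If `f · k(t - ·)` is not integrable, its integral is `0` and simply `f t ≤ a`.
-/

open MeasureTheory Real Set

/-- No integrability of `F` is needed: otherwise its integral is `0`. -/
lemma intervalIntegral.integral_mono_on_of_nonneg {F G : ℝ → ℝ} {a b : ℝ} (hab : a ≤ b)
    (hG : IntervalIntegrable G volume a b) (hF : ∀ x ∈ Icc a b, 0 ≤ F x)
    (hFG : ∀ x ∈ Icc a b, F x ≤ G x) :
    ∫ x in a..b, F x ≤ ∫ x in a..b, G x := by
  by_cases hFi : IntervalIntegrable F volume a b
  · exact intervalIntegral.integral_mono_on hab hFi hG hFG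
  · rw [intervalIntegral.integral_undef hFi]
    exact intervalIntegral.integral_nonneg hab fun x hx => (hF x hx).trans (hFG x hx)

lemma MeasureTheory.Integrable.of_mul_of_le {α : Type*} [MeasurableSpace α] {μ : Measure α}
    {f w : α → ℝ} {m : ℝ} (hm : 0 < m) (hw : AEStronglyMeasurable w μ)
    (hwm : ∀ᵐ x ∂μ, m ≤ w x) (h : Integrable (fun x => f x * w x) μ) : Integrable f μ := by
  have hf : (fun x => f x * w x * (w x)⁻¹) =ᵐ[μ] f := by
    filter_upwards [hwm] with x hx
    rw [mul_inv_cancel_right₀ (hm.trans_le hx).ne']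
  refine (h.norm.const_mul m⁻¹).mono'
    ((h.aestronglyMeasurable.mul hw.aemeasurable.inv.aestronglyMeasurable).congr hf) ?_
  filter_upwards [hwm] with x hx
  rw [le_inv_mul_iff₀ hm, norm_mul, mul_comm m]
  exact mul_le_mul_of_nonneg_left (hx.trans (le_abs_self _)) (norm_nonneg _)

lemma intervalIntegrable_of_norm_le {g : ℝ → ℝ} {a b C : ℝ} (hab : a ≤ b) (hg : Measurable g)
    (hC : ∀ x ∈ Ioc a b, ‖g x‖ ≤ C) : IntervalIntegrable g volume a b :=
  (intervalIntegrable_iff_integrableOn_Ioc_of_le hab).2 <|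
    Measure.integrableOn_of_bounded measure_Ioc_lt_top.ne hg.aestronglyMeasurable
      (ae_restrict_of_forall_mem measurableSet_Ioc hC)

section VolterraInequality

variable {f k : ℝ → ℝ} {T A : ℝ}

lemma sub_mem_Icc_zero {r s : ℝ} (hr : r ∈ Icc 0 s) (hsT : s ≤ T) : s - r ∈ Icc 0 T :=
  ⟨sub_nonneg.2 hr.2, by linarith [hr.1]⟩

lemma intervalIntegrable_of_nonneg_of_le (hk : Measurable k) (hk0 : ∀ u ∈ Icc 0 T, 0 ≤ k u)
    (hkA : ∀ u ∈ Icc 0 T, k u ≤ A) (hT : 0 ≤ T) : IntervalIntegrable k volume 0 T :=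
  intervalIntegrable_of_norm_le hT hk fun u hu => by
    simpa [abs_of_nonneg (hk0 u (Ioc_subset_Icc_self hu))] using hkA u (Ioc_subset_Icc_self hu)

lemma integral_mul_comp_sub_le {g : ℝ → ℝ} {M s : ℝ} (hk : Measurable k)
    (hk0 : ∀ u ∈ Icc 0 T, 0 ≤ k u) (hkA : ∀ u ∈ Icc 0 T, k u ≤ A) (hs : s ∈ Icc 0 T)
    (hg0 : ∀ r ∈ Icc 0 s, 0 ≤ g r) (hgM : ∀ r ∈ Icc 0 s, g r ≤ M) :
    ∫ r in 0..s, g r * k (s - r) ≤ M * ∫ u in 0..T, k u := by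
  have hkT := intervalIntegrable_of_nonneg_of_le hk hk0 hkA (hs.1.trans hs.2)
  have hks : IntervalIntegrable (fun r => k (s - r)) volume 0 s := by
    simpa using ((hkT.mono_set (uIcc_subset_uIcc_left (Icc_subset_uIcc hs))).comp_sub_left s).symm
  calc ∫ r in 0..s, g r * k (s - r)
      ≤ ∫ r in 0..s, M * k (s - r) :=
        intervalIntegral.integral_mono_on_of_nonneg hs.1
          (hks.const_mul M)
          (fun r hr => mul_nonneg (hg0 r hr) (hk0 _ (sub_mem_Icc_zero hr hs.2)))
          (fun r hr => mul_le_mul_of_nonneg_right (hgM r hr) (hk0 _ (sub_mem_Icc_zero hr hs.2)))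
    _ = M * ∫ u in 0..s, k u := by
        rw [intervalIntegral.integral_const_mul, intervalIntegral.integral_comp_sub_left, sub_self,
          sub_zero]
    _ ≤ M * ∫ u in 0..T, k u := by
        gcongr
        · exact (hg0 0 ⟨le_rfl, hs.1⟩).trans (hgM 0 ⟨le_rfl, hs.1⟩)
        · exact intervalIntegral.integral_mono_interval le_rfl hs.1 hs.2
            (ae_restrict_of_forall_mem measurableSet_Ioc fun u hu => hk0 u (Ioc_subset_Icc_self hu))
            hkT

lemma integrableOn_of_intervalIntegrable_mul_comp_sub {m t : ℝ} (hk : Measurable k) (hm : 0 < m)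
    (hkm : ∀ u ∈ Ioc 0 T, m ≤ k u) (ht : t ∈ Icc 0 T)
    (hI : IntervalIntegrable (fun s => f s * k (t - s)) volume 0 t) : IntegrableOn f (Ioc 0 t) := by
  rw [integrableOn_Ioc_iff_integrableOn_Ioo]
  exact Integrable.of_mul_of_le hm (hk.comp (measurable_id.const_sub t)).aestronglyMeasurable
    (ae_restrict_of_forall_mem measurableSet_Ioo fun r hr =>
      hkm (t - r) ⟨sub_pos.2 hr.2, by linarith [hr.1, ht.2]⟩)
    ((intervalIntegrable_iff_integrableOn_Ioc_of_le ht.1).1 hI |>.mono_set Ioo_subset_Ioc_self)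

lemma bddAbove_image_of_le_add_mul_integral {κ a t : ℝ} (hk0 : ∀ u ∈ Icc 0 T, 0 ≤ k u)
    (hkA : ∀ u ∈ Icc 0 T, k u ≤ A) (hκ : 0 ≤ κ) (hf0 : ∀ t ∈ Icc 0 T, 0 ≤ f t)
    (hf : ∀ t ∈ Icc 0 T, f t ≤ a + κ * ∫ s in 0..t, f s * k (t - s)) (ht : t ∈ Icc 0 T)
    (hfi : IntegrableOn f (Ioc 0 t)) : BddAbove (f '' Icc 0 t) := by
  have hsub : Icc 0 t ⊆ Icc 0 T := Icc_subset_Icc_right ht.2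
  have hA : 0 ≤ A := (hk0 0 (hsub ⟨le_rfl, ht.1⟩)).trans (hkA 0 (hsub ⟨le_rfl, ht.1⟩))
  have hfi' : ∀ s ∈ Icc 0 t, IntervalIntegrable f volume 0 s := fun s hs =>
    (intervalIntegrable_iff_integrableOn_Ioc_of_le hs.1).2
      (hfi.mono_set (Ioc_subset_Ioc_right hs.2))
  refine ⟨a + κ * (A * ∫ r in 0..t, f r), ?_⟩
  rintro _ ⟨s, hs, rfl⟩
  have hf0s : ∀ r ∈ Icc 0 s, 0 ≤ f r := fun r hr => hf0 r (hsub ⟨hr.1, hr.2.trans hs.2⟩)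
  refine (hf s (hsub hs)).trans ?_
  gcongr
  calc ∫ r in 0..s, f r * k (s - r)
      ≤ ∫ r in 0..s, A * f r :=
        intervalIntegral.integral_mono_on_of_nonneg hs.1 ((hfi' s hs).const_mul A)
          (fun r hr => mul_nonneg (hf0s r hr) (hk0 _ (sub_mem_Icc_zero hr (hs.2.trans ht.2))))
          (fun r hr => by
            rw [mul_comm A]
            exact mul_le_mul_of_nonneg_left (hkA _ (sub_mem_Icc_zero hr (hs.2.trans ht.2)))
              (hf0s r hr))
    _ = A * ∫ r in 0..s, f r := intervalIntegral.integral_const_mul _ _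
    _ ≤ A * ∫ r in 0..t, f r := by
        gcongr
        exact intervalIntegral.integral_mono_interval le_rfl hs.1 hs.2
          (ae_restrict_of_forall_mem measurableSet_Ioc fun r hr =>
            hf0 r (hsub (Ioc_subset_Icc_self hr)))
          (hfi' t ⟨ht.1, le_rfl⟩)

theorem le_div_one_sub_of_le_add_mul_integral {m κ a : ℝ}
    (hk : Measurable k) (hk0 : ∀ u ∈ Icc 0 T, 0 ≤ k u) (hkA : ∀ u ∈ Icc 0 T, k u ≤ A)
    (hm : 0 < m) (hkm : ∀ u ∈ Ioc 0 T, m ≤ k u)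
    (hκ : 0 ≤ κ) (hκk : κ * ∫ u in 0..T, k u < 1) (ha : 0 ≤ a)
    (hf0 : ∀ t ∈ Icc 0 T, 0 ≤ f t)
    (hf : ∀ t ∈ Icc 0 T, f t ≤ a + κ * ∫ s in 0..t, f s * k (t - s)) :
    ∀ t ∈ Icc 0 T, f t ≤ a / (1 - κ * ∫ u in 0..T, k u) := by
  intro t ht
  set θ := κ * ∫ u in 0..T, k u
  have hθ0 : 0 ≤ θ := mul_nonneg hκ (intervalIntegral.integral_nonneg (ht.1.trans ht.2) hk0)
  have hsub : Icc 0 t ⊆ Icc 0 T := Icc_subset_Icc_right ht.2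
  by_cases hI : IntervalIntegrable (fun s => f s * k (t - s)) volume 0 t
  swap
  · have hft := hf t ht
    rw [intervalIntegral.integral_undef hI, mul_zero, add_zero] at hft
    exact hft.trans (le_div_self ha (by linarith) (by linarith))
  have hbdd := bddAbove_image_of_le_add_mul_integral hk0 hkA hκ hf0 hf ht
    (integrableOn_of_intervalIntegrable_mul_comp_sub hk hm hkm ht hI)
  set M := sSup (f '' Icc 0 t)
  have hM : ∀ s ∈ Icc 0 t, f s ≤ M := fun s hs => le_csSup hbdd (mem_image_of_mem f hs)
  have hMθ : M ≤ a + θ * M := by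
    refine csSup_le ⟨f 0, mem_image_of_mem f ⟨le_rfl, ht.1⟩⟩ ?_
    rintro _ ⟨s, hs, rfl⟩
    calc f s ≤ a + κ * ∫ r in 0..s, f r * k (s - r) := hf s (hsub hs)
      _ ≤ a + κ * (M * ∫ u in 0..T, k u) := by
          gcongr
          exact integral_mul_comp_sub_le hk hk0 hkA (hsub hs)
            (fun r hr => hf0 r (hsub ⟨hr.1, hr.2.trans hs.2⟩))
            fun r hr => hM r ⟨hr.1, hr.2.trans hs.2⟩
      _ = a + θ * M := by ring
  rw [le_div_iff₀ (by linarith)]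
  nlinarith [hM t ⟨ht.1, le_rfl⟩]

end VolterraInequality

lemma intervalIntegrable_min_inv {M a b : ℝ} (hM : 0 ≤ M) (ha : 0 ≤ a) (hab : a ≤ b) :
    IntervalIntegrable (fun u : ℝ => min u⁻¹ M) volume a b :=
  intervalIntegrable_of_norm_le hab (measurable_inv.min measurable_const) fun u hu => by
    have hu0 : 0 < u := ha.trans_lt hu.1
    rw [norm_of_nonneg (le_min (inv_nonneg.2 hu0.le) hM)]
    exact min_le_right _ _

theorem integral_min_inv_le {M t : ℝ} (hM : 0 < M) (ht : 0 ≤ t) :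
    ∫ u in 0..t, min u⁻¹ M ≤ 1 + log⁺ (M * t) := by
  rcases le_or_gt t M⁻¹ with htM | htM
  · calc ∫ u in 0..t, min u⁻¹ M
        ≤ ∫ u in 0..t, M := intervalIntegral.integral_mono_on ht
          (intervalIntegrable_min_inv hM.le le_rfl ht) intervalIntegrable_const
          fun u _ => min_le_right _ _
      _ = M * t := by simp [mul_comm]
      _ ≤ M * M⁻¹ := by gcongr
      _ = 1 := mul_inv_cancel₀ hM.ne'
      _ ≤ 1 + log⁺ (M * t) := le_add_of_nonneg_right posLog_nonneg
  · have hM' : 0 < M⁻¹ := inv_pos.2 hM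
    rw [← intervalIntegral.integral_add_adjacent_intervals
      (intervalIntegrable_min_inv hM.le le_rfl hM'.le)
      (intervalIntegrable_min_inv hM.le hM'.le htM.le)]
    gcongr ?_ + ?_
    · calc ∫ u in 0..M⁻¹, min u⁻¹ M
          ≤ ∫ u in 0..M⁻¹, M := intervalIntegral.integral_mono_on hM'.le
            (intervalIntegrable_min_inv hM.le le_rfl hM'.le) intervalIntegrable_const
            fun u _ => min_le_right _ _
        _ = 1 := by simp [hM.ne']
    · have h0 : (0 : ℝ) ∉ uIcc M⁻¹ t := by
        rw [uIcc_of_le htM.le]; exact fun h => (hM'.trans_le h.1).false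
      calc ∫ u in M⁻¹..t, min u⁻¹ M
          ≤ ∫ u in M⁻¹..t, u⁻¹ := intervalIntegral.integral_mono_on htM.le
            (intervalIntegrable_min_inv hM.le hM'.le htM.le)
            (intervalIntegral.intervalIntegrable_inv (fun u hu h => h0 (h ▸ hu))
              continuousOn_id) fun u _ => min_le_left _ _
        _ = log (M * t) := by rw [integral_inv h0, div_inv_eq_mul, mul_comm]
        _ ≤ log⁺ (M * t) := le_max_right _ _

theorem integral_min_inv_four_pi_mul_le {A t : ℝ} (hA : 0 < A) (ht : 0 ≤ t) :
    ∫ u in 0..t, min (4 * π * u)⁻¹ A ≤ (1 + log⁺ (4 * π * A * t)) / (4 * π) := by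
  have h4π : 0 < 4 * π := by positivity
  have hscale : (fun u => min (4 * π * u)⁻¹ A) = fun u => (4 * π)⁻¹ * min u⁻¹ (4 * π * A) := by
    funext u
    rw [mul_min_of_nonneg _ _ (inv_nonneg.2 h4π.le), mul_inv, inv_mul_cancel_left₀ h4π.ne']
  rw [hscale, intervalIntegral.integral_const_mul, inv_mul_eq_div]
  gcongr
  exact integral_min_inv_le (by positivity) ht

theorem le_div_one_sub_of_le_add_mul_integral_min_inv {f : ℝ → ℝ} {T A κ a : ℝ} (hT : 0 < T)
    (hA : 0 < A) (hκ : 0 ≤ κ) (hκk : κ * ∫ u in 0..T, min (4 * π * u)⁻¹ A < 1) (ha : 0 ≤ a)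
    (hf0 : ∀ t ∈ Icc 0 T, 0 ≤ f t)
    (hf : ∀ t ∈ Icc 0 T, f t ≤ a + κ * ∫ s in 0..t, f s * min (4 * π * (t - s))⁻¹ A) :
    ∀ t ∈ Icc 0 T, f t ≤ a / (1 - κ * ∫ u in 0..T, min (4 * π * u)⁻¹ A) :=
  le_div_one_sub_of_le_add_mul_integral (k := fun u => min (4 * π * u)⁻¹ A)
    (by fun_prop) (fun u hu => le_min (by have := hu.1; positivity) hA.le)
    (fun u _ => min_le_right _ _) (lt_min (by positivity) hA : 0 < min (4 * π * T)⁻¹ A)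
    (fun u hu => min_le_min_right A
      (inv_anti₀ (by have := hu.1; positivity) (by gcongr; exact hu.2)))
    hκ hκk ha hf0 hf

theorem div_log_inv_mul_integral_min_inv_le {b c T ε : ℝ} (hc : 0 < c) (hT : 0 ≤ T)
    (hε0 : 0 < ε) (hε1 : ε < 1) :
    b ^ 2 / log ε⁻¹ * ∫ u in 0..T, min (4 * π * u)⁻¹ (c / ε ^ 2)
      ≤ b ^ 2 / (2 * π) + b ^ 2 * (1 + log⁺ (4 * π * c * T)) / (4 * π) / log ε⁻¹ := by
  have hL : 0 < log ε⁻¹ := log_pos ((one_lt_inv₀ hε0).2 hε1)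
  have hlog : log⁺ (4 * π * (c / ε ^ 2) * T) ≤ log⁺ (4 * π * c * T) + 2 * log ε⁻¹ := calc
    log⁺ (4 * π * (c / ε ^ 2) * T) = log⁺ (4 * π * c * T * ε⁻¹ ^ 2) := by ring_nf
    _ ≤ log⁺ (4 * π * c * T) + log⁺ (ε⁻¹ ^ 2) := posLog_mul
    _ = log⁺ (4 * π * c * T) + 2 * log ε⁻¹ := by
        have hε : 1 ≤ |ε⁻¹| := by rw [abs_inv, abs_of_pos hε0]; exact (one_le_inv₀ hε0).2 hε1.le
        rw [posLog_pow, posLog_eq_log hε]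
        norm_num
  calc b ^ 2 / log ε⁻¹ * ∫ u in 0..T, min (4 * π * u)⁻¹ (c / ε ^ 2)
      ≤ b ^ 2 / log ε⁻¹ * ((1 + (log⁺ (4 * π * c * T) + 2 * log ε⁻¹)) / (4 * π)) := by
        gcongr
        exact (integral_min_inv_four_pi_mul_le (by positivity) hT).trans (by gcongr)
    _ = b ^ 2 / (2 * π) + b ^ 2 * (1 + log⁺ (4 * π * c * T)) / (4 * π) / log ε⁻¹ := by
        generalize log ε⁻¹ = L at hL
        field_simp
        ring

/-- Grönwall-type iteration lemma.
Fix constants `0 < b < √(2π)` and `a, c, T > 0`. There exists `ε₀ > 0` (depending only on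
`b, c, T`) such that for all `ε ∈ (0, ε₀)`: if `f : [0,T] → [0,∞)` satisfies
`f t ≤ a + (b²/log ε⁻¹) ∫₀ᵗ f s · min(1/(4π(t−s)), c/ε²) ds` for all `t ∈ [0,T]`,
then `f t ≤ a·C` on `[0,T]`, where `C > 0` depends only on `b`. -/
theorem stmt0 (b : ℝ) (hb0 : 0 < b) (hb : b < Real.sqrt (2 * Real.pi)) :
    ∃ C > (0:ℝ), ∀ c T : ℝ, 0 < c → 0 < T →
      ∃ ε₀ > (0:ℝ), ∀ ε : ℝ, ε ∈ Set.Ioo 0 ε₀ →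
        ∀ a : ℝ, 0 < a → ∀ f : ℝ → ℝ,
          (∀ t ∈ Set.Icc (0:ℝ) T, 0 ≤ f t) →
          (∀ t ∈ Set.Icc (0:ℝ) T,
            f t ≤ a + b ^ 2 / Real.log ε⁻¹ *
              ∫ s in (0:ℝ)..t, f s * min ((4 * Real.pi * (t - s))⁻¹) (c / ε ^ 2)) →
          ∀ t ∈ Set.Icc (0:ℝ) T, f t ≤ a * C := by
  set θ := b ^ 2 / (2 * π)
  have hθ : θ < 1 := (div_lt_one (by positivity)).2 ((lt_sqrt hb0.le).1 hb)
  refine ⟨2 / (1 - θ), div_pos two_pos (by linarith), fun c T hc hT => ?_⟩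
  set B := b ^ 2 * (1 + log⁺ (4 * π * c * T)) / (4 * π)
  have hB : 0 < B := by have := posLog_nonneg (x := 4 * π * c * T); positivity
  have hε₀ : 0 < 2 * B / (1 - θ) := div_pos (by linarith) (by linarith)
  refine ⟨exp (-(2 * B / (1 - θ))), exp_pos _, ?_⟩
  rintro ε ⟨hε0, hεε₀⟩ a ha f hf0 hf
  have hL : 2 * B / (1 - θ) < log ε⁻¹ := by
    rw [log_inv, lt_neg, ← log_exp (-_)]
    exact log_lt_log hε0 hεε₀
  have hε1 : ε < 1 := hεε₀.trans (exp_lt_one_iff.2 (neg_lt_zero.2 hε₀))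
  have hcoupling := div_log_inv_mul_integral_min_inv_le (b := b) hc hT.le hε0 hε1
  have hBL : B / log ε⁻¹ ≤ (1 - θ) / 2 := by
    rw [div_le_iff₀ (hε₀.trans hL)]
    rw [div_lt_iff₀ (by linarith)] at hL
    linarith
  intro t ht
  calc f t ≤ a / (1 - b ^ 2 / log ε⁻¹ * ∫ u in 0..T, min (4 * π * u)⁻¹ (c / ε ^ 2)) :=
        le_div_one_sub_of_le_add_mul_integral_min_inv hT (by positivity)
          (div_nonneg (sq_nonneg b) (hε₀.trans hL).le) (by linarith) ha.le hf0 hf t ht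
    _ ≤ a / ((1 - θ) / 2) := by gcongr; linarith
    _ = a * (2 / (1 - θ)) := by field_simp
end

section
/- Let φ : ℝ² → [0,∞) be continuous, compactly supported, with ∫_{ℝ²} φ(x) dx = 1, and define R(x) := ∫_{ℝ²} φ(x+y)φ(y) dy. Define recursively h₀(t) := 1 and h_n(t) := ∫₀ᵗ h_{n−1}(s) ∫_{ℝ²} G_{t−s}(z) R(z) dz ds for n ≥ 1. Then for every T > 0 and every ε > 0 with ε² ≤ 2π‖φ‖_∞ T, one has for all n ≥ 0 and all θ ∈ [0, T/ε²]: h_n(θ) ≤ [ (1/(2π)) + (1/(2π)) log( 2π‖φ‖_∞ T / ε² ) ]ⁿ. -/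
/-!
The autocorrelation `R` of `φ` is nonnegative, bounded by `‖φ‖_∞` and has unit mass, so the
kernel `k(u) = ∫ G_u R` satisfies `0 ≤ k(u) ≤ min(‖φ‖_∞, 1/(2πu))`. The integral of this
majorant over any `[0, θ]` with `θ ≤ T/ε²` is at most `(1 + log(2π‖φ‖_∞T/ε²))/(2π)`, and
induction on `n` through the recursion `h_{n+1}(t) = ∫₀ᵗ h_n(s) k(t - s) ds` gives the bound.
-/

open MeasureTheory Real Set

/-- The two-dimensional heat kernel `G_t(x) = (1/(2πt)) exp(−|x|²/(2t))`. -/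
noncomputable def G (t : ℝ) (x : EuclideanSpace ℝ (Fin 2)) : ℝ :=
  (2 * Real.pi * t)⁻¹ * Real.exp (-‖x‖ ^ 2 / (2 * t))

noncomputable def autocorrelation {E : Type*} [MeasurableSpace E] [Add E] (μ : Measure E)
    (φ : E → ℝ) (x : E) : ℝ :=
  ∫ y, φ (x + y) * φ y ∂μ

section Autocorrelation

variable {E : Type*} [MeasurableSpace E] [AddGroup E] {μ : Measure E} {φ : E → ℝ}

theorem autocorrelation_nonneg (hφ0 : ∀ x, 0 ≤ φ x) (x : E) : 0 ≤ autocorrelation μ φ x :=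
  integral_nonneg fun _ => mul_nonneg (hφ0 _) (hφ0 _)

theorem autocorrelation_le {S : ℝ} (hφ : Integrable φ μ) (hφ0 : ∀ x, 0 ≤ φ x)
    (hφS : ∀ x, φ x ≤ S) (x : E) : autocorrelation μ φ x ≤ S * ∫ y, φ y ∂μ := by
  rw [← integral_const_mul]
  exact integral_mono_of_nonneg (.of_forall fun _ => mul_nonneg (hφ0 _) (hφ0 _))
    (hφ.const_mul S) (.of_forall fun _ => mul_le_mul_of_nonneg_right (hφS _) (hφ0 _))

variable [MeasurableNeg E] [μ.IsNegInvariant]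

theorem autocorrelation_eq_convolution :
    autocorrelation μ φ = convolution (fun y => φ (-y)) φ (ContinuousLinearMap.mul ℝ ℝ) μ := by
  ext x
  rw [autocorrelation, convolution_def, ← integral_neg_eq_self]
  simp [sub_eq_add_neg, mul_comm]

variable [MeasurableAdd₂ E] [SFinite μ] [μ.IsAddRightInvariant]

theorem integrable_autocorrelation (hφ : Integrable φ μ) : Integrable (autocorrelation μ φ) μ := by
  rw [autocorrelation_eq_convolution]
  exact hφ.comp_neg.integrable_convolution _ hφ

theorem integral_autocorrelation (hφ : Integrable φ μ) :
    ∫ x, autocorrelation μ φ x ∂μ = (∫ x, φ x ∂μ) ^ 2 := by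
  rw [autocorrelation_eq_convolution, integral_convolution _ hφ.comp_neg hφ,
    integral_neg_eq_self]
  simp [sq]

end Autocorrelation

theorem G_nonneg {u : ℝ} (hu : 0 ≤ u) (x : EuclideanSpace ℝ (Fin 2)) : 0 ≤ G u x :=
  mul_nonneg (by positivity) (exp_nonneg _)

theorem G_le {u : ℝ} (hu : 0 ≤ u) (x : EuclideanSpace ℝ (Fin 2)) : G u x ≤ (2 * π * u)⁻¹ :=
  mul_le_of_le_one_right (by positivity) <| exp_le_one_iff.2 <|
    div_nonpos_of_nonpos_of_nonneg (neg_nonpos.2 (by positivity)) (by positivity)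

theorem integral_G {u : ℝ} (hu : 0 < u) : ∫ x, G u x = 1 := by
  have hG : G u = fun x => (2 * π * u)⁻¹ * exp (-(2 * u)⁻¹ * ‖x‖ ^ 2) := by
    ext x
    rw [G]
    ring_nf
  rw [hG, integral_const_mul, GaussianFourier.integral_rexp_neg_mul_sq_norm (by positivity),
    finrank_euclideanSpace_fin]
  field_simp
  norm_num

theorem integrable_G {u : ℝ} (hu : 0 < u) : Integrable (G u) :=
  .of_integral_ne_zero (by rw [integral_G hu]; exact one_ne_zero)

theorem integral_G_mul_le {R : EuclideanSpace ℝ (Fin 2) → ℝ} {S u : ℝ} (hR0 : ∀ x, 0 ≤ R x)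
    (hRS : ∀ x, R x ≤ S) (hR : Integrable R) (hR1 : ∫ x, R x = 1) (hu : 0 < u) :
    ∫ z, G u z * R z ≤ min S ((2 * π)⁻¹ * u⁻¹) := by
  have hGR : 0 ≤ᵐ[volume] fun z => G u z * R z :=
    .of_forall fun z => mul_nonneg (G_nonneg hu.le z) (hR0 z)
  refine le_min ?_ ?_
  · calc ∫ z, G u z * R z ≤ ∫ z, G u z * S :=
          integral_mono_of_nonneg hGR ((integrable_G hu).mul_const S)
            (.of_forall fun z => mul_le_mul_of_nonneg_left (hRS z) (G_nonneg hu.le z))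
      _ = S := by rw [integral_mul_const, integral_G hu, one_mul]
  · calc ∫ z, G u z * R z ≤ ∫ z, (2 * π * u)⁻¹ * R z :=
          integral_mono_of_nonneg hGR (hR.const_mul _)
            (.of_forall fun z => mul_le_mul_of_nonneg_right (G_le hu.le z) (hR0 z))
      _ = (2 * π)⁻¹ * u⁻¹ := by rw [integral_const_mul, hR1, mul_one, mul_inv]

section Majorant

variable {S c : ℝ}

theorem intervalIntegrable_min_const_mul_inv (hS : 0 ≤ S) (hc : 0 ≤ c) {b : ℝ} (hb : 0 ≤ b) :
    IntervalIntegrable (fun u => min S (c * u⁻¹)) volume 0 b := by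
  refine (intervalIntegrable_const (c := S)).mono_fun
    (measurable_const.min (measurable_const.mul measurable_inv)).aestronglyMeasurable ?_
  rw [uIoc_of_le hb]
  filter_upwards [ae_restrict_mem measurableSet_Ioc] with u hu
  have : 0 ≤ min S (c * u⁻¹) := le_min hS (mul_nonneg hc (inv_nonneg.2 hu.1.le))
  rw [norm_of_nonneg this, norm_of_nonneg hS]
  exact min_le_left _ _

theorem integral_min_const_mul_inv_le (hS : 0 < S) (hc : 0 < c) {b L : ℝ} (hb : 0 ≤ b)
    (hL : 1 ≤ L) (hbL : S * b ≤ c * L) :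
    ∫ u in 0..b, min S (c * u⁻¹) ≤ c + c * log L := by
  set a := c / S
  have ha : 0 < a := div_pos hc hS
  have hint : ∀ b', 0 ≤ b' → IntervalIntegrable (fun u => min S (c * u⁻¹)) volume 0 b' :=
    fun _ => intervalIntegrable_min_const_mul_inv hS.le hc.le
  have head : ∀ b' ∈ Icc 0 a, ∫ u in 0..b', min S (c * u⁻¹) ≤ c := fun b' hb' =>
    calc ∫ u in 0..b', min S (c * u⁻¹) ≤ ∫ _ in 0..b', S :=
          intervalIntegral.integral_mono_on hb'.1 (hint b' hb'.1) intervalIntegrable_const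
            fun u _ => min_le_left _ _
      _ = b' * S := by simp
      _ ≤ c := (le_div_iff₀ hS).1 hb'.2
  have hlogL : 0 ≤ c * log L := mul_nonneg hc.le (log_nonneg hL)
  rcases le_or_gt b a with hba | hab
  · linarith [head b ⟨hb, hba⟩]
  have hint_ab : IntervalIntegrable (fun u => min S (c * u⁻¹)) volume a b :=
    (hint b hb).mono_set <| by
      rw [uIcc_of_le hb, uIcc_of_le hab.le]
      exact Icc_subset_Icc ha.le le_rfl
  have tail : ∫ u in a..b, min S (c * u⁻¹) ≤ c * log L :=
    calc ∫ u in a..b, min S (c * u⁻¹) ≤ ∫ u in a..b, c * u⁻¹ := by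
          refine intervalIntegral.integral_mono_on hab.le hint_ab ?_ fun u _ => min_le_right _ _
          exact (continuousOn_const.mul (continuousOn_inv₀.mono fun u hu =>
              ((ha.trans_le (uIcc_of_le hab.le ▸ hu).1).ne'))).intervalIntegrable
      _ = c * log (b / a) := by
          rw [intervalIntegral.integral_const_mul, integral_inv_of_pos ha (ha.trans hab)]
      _ ≤ c * log L := by
          gcongr
          · exact div_pos (ha.trans hab) ha
          · rw [div_le_iff₀ ha, mul_div_assoc', le_div_iff₀ hS]
            linarith
  rw [← intervalIntegral.integral_add_adjacent_intervals (hint a ha.le) hint_ab]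
  linarith [head a ⟨ha.le, le_rfl⟩]

end Majorant

theorem volterra_iterate_le {h : ℕ → ℝ → ℝ} {k m : ℝ → ℝ} {B M : ℝ} (hh0 : ∀ t, h 0 t = 1)
    (hhrec : ∀ n t, h (n + 1) t = ∫ s in 0..t, h n s * k (t - s))
    (hk0 : ∀ u > 0, 0 ≤ k u) (hkm : ∀ u > 0, k u ≤ m u)
    (hm : ∀ b ∈ Icc 0 B, IntervalIntegrable m volume 0 b)
    (hmM : ∀ b ∈ Icc 0 B, ∫ u in 0..b, m u ≤ M) :
    ∀ n, ∀ θ ∈ Icc 0 B, h n θ ≤ M ^ n := by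
  intro n
  induction n with
  | zero => simp [hh0]
  | succ n ih =>
    intro θ hθ
    have hM : 0 ≤ M := by simpa using hmM 0 ⟨le_rfl, hθ.1.trans hθ.2⟩
    rw [hhrec]
    by_cases hfi : IntervalIntegrable (fun s => h n s * k (θ - s)) volume 0 θ
    swap
    · rw [intervalIntegral.integral_undef hfi]
      positivity
    have hpoint : ∀ s ∈ Ioo 0 θ, h n s * k (θ - s) ≤ M ^ n * m (θ - s) := fun s hs =>
      have hu : θ - s > 0 := sub_pos.2 hs.2
      mul_le_mul (ih s ⟨hs.1.le, hs.2.le.trans hθ.2⟩) (hkm _ hu) (hk0 _ hu) (pow_nonneg hM n)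
    calc ∫ s in 0..θ, h n s * k (θ - s) ≤ ∫ s in 0..θ, M ^ n * m (θ - s) :=
          intervalIntegral.integral_mono_on_of_le_Ioo hθ.1 hfi
            (by simpa using ((hm θ hθ).comp_sub_left θ).symm.const_mul (M ^ n)) hpoint
      _ = M ^ n * ∫ u in 0..θ, m u := by
          rw [intervalIntegral.integral_const_mul, intervalIntegral.integral_comp_sub_left]
          simp
      _ ≤ M ^ (n + 1) := by
          rw [pow_succ]
          gcongr
          exact hmM θ hθ

theorem stmt7_general (φ : EuclideanSpace ℝ (Fin 2) → ℝ)
    (hφc : Continuous φ) (hφs : HasCompactSupport φ) (hφ0 : ∀ x, 0 ≤ φ x)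
    (hφ1 : (∫ x, φ x) = 1)
    (R : EuclideanSpace ℝ (Fin 2) → ℝ)
    (hR : ∀ x, R x = ∫ y, φ (x + y) * φ y)
    (h : ℕ → ℝ → ℝ) (hh0 : ∀ t, h 0 t = 1)
    (hhrec : ∀ n : ℕ, ∀ t : ℝ,
      h (n + 1) t = ∫ s in (0:ℝ)..t, h n s * ∫ z, G (t - s) z * R z)
    (T ε : ℝ) (hε : 0 < ε)
    (hε2 : ε ^ 2 ≤ 2 * Real.pi * (⨆ x, φ x) * T) :
    ∀ n : ℕ, ∀ θ ∈ Set.Icc (0:ℝ) (T / ε ^ 2),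
      h n θ ≤ ((2 * Real.pi)⁻¹
        + (2 * Real.pi)⁻¹ * Real.log (2 * Real.pi * (⨆ x, φ x) * T / ε ^ 2)) ^ n := by
  set S := ⨆ x, φ x
  obtain rfl : R = autocorrelation volume φ := funext hR
  have hφ : Integrable φ := hφc.integrable_of_hasCompactSupport hφs
  have hφS : ∀ x, φ x ≤ S := le_ciSup (hφc.bddAbove_range_of_hasCompactSupport hφs)
  have hL : 1 ≤ 2 * π * S * T / ε ^ 2 := (one_le_div (by positivity)).2 hε2
  have hS : 0 < S := by
    refine (le_trans (hφ0 0) (hφS 0)).lt_of_ne fun hS0 => ?_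
    have := (pow_pos hε 2).trans_le hε2
    simp [← hS0] at this
  have hk : ∀ u > 0, ∫ z, G u z * autocorrelation volume φ z ≤ min S ((2 * π)⁻¹ * u⁻¹) :=
    fun u hu => integral_G_mul_le (autocorrelation_nonneg hφ0)
      (fun x => by simpa [hφ1] using autocorrelation_le hφ hφ0 hφS x)
      (integrable_autocorrelation hφ) (by rw [integral_autocorrelation hφ, hφ1, one_pow]) hu
  refine volterra_iterate_le hh0 hhrec
    (fun u hu => integral_nonneg fun z => mul_nonneg (G_nonneg hu.le z)
      (autocorrelation_nonneg hφ0 z)) hk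
    (fun b hb => intervalIntegrable_min_const_mul_inv hS.le (by positivity) hb.1)
    fun b hb => integral_min_const_mul_inv_le hS (by positivity) hb.1 hL ?_
  calc S * b ≤ S * (T / ε ^ 2) := by gcongr; exact hb.2
    _ = (2 * π)⁻¹ * (2 * π * S * T / ε ^ 2) := by field_simp

/-- With `φ` and `R` as in Statement 4, define `h₀(t) := 1` and
`h_n(t) := ∫₀ᵗ h_{n−1}(s) ∫ G_{t−s}(z) R(z) dz ds` for `n ≥ 1`. Then for every `T > 0` and
every `ε > 0` with `ε² ≤ 2π‖φ‖_∞ T`, for all `n ≥ 0` and all `θ ∈ [0, T/ε²]`,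
`h_n(θ) ≤ [(1/(2π)) + (1/(2π)) log(2π‖φ‖_∞ T/ε²)]ⁿ`. -/
theorem stmt7 (φ : EuclideanSpace ℝ (Fin 2) → ℝ)
    (hφc : Continuous φ) (hφs : HasCompactSupport φ) (hφ0 : ∀ x, 0 ≤ φ x)
    (hφ1 : (∫ x, φ x) = 1)
    (R : EuclideanSpace ℝ (Fin 2) → ℝ)
    (hR : ∀ x, R x = ∫ y, φ (x + y) * φ y)
    (h : ℕ → ℝ → ℝ) (hh0 : ∀ t, h 0 t = 1)
    (hhrec : ∀ n : ℕ, ∀ t : ℝ,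
      h (n + 1) t = ∫ s in (0:ℝ)..t, h n s * ∫ z, G (t - s) z * R z)
    (T ε : ℝ) (hT : 0 < T) (hε : 0 < ε)
    (hε2 : ε ^ 2 ≤ 2 * Real.pi * (⨆ x, φ x) * T) :
    ∀ n : ℕ, ∀ θ ∈ Set.Icc (0:ℝ) (T / ε ^ 2),
      h n θ ≤ ((2 * Real.pi)⁻¹
        + (2 * Real.pi)⁻¹ * Real.log (2 * Real.pi * (⨆ x, φ x) * T / ε ^ 2)) ^ n :=
  stmt7_general φ hφc hφs hφ0 hφ1 R hR h hh0 hhrec T ε hε hε2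
end

section
/- For all real numbers 0 ≤ s ≤ t and every nonzero ξ ∈ ℝ², one has ∫₀ᵗ ( e^{−(t−r)|ξ|²/2} · 1_{[0,t]}(r) − e^{−(s−r)|ξ|²/2} · 1_{[0,s]}(r) )² dr ≤ (3/2)(t−s). Equivalently, ∫₀ˢ e^{−(s−r)|ξ|²} ( e^{−(t−s)|ξ|²/2} − 1 )² dr + ∫_s^t e^{−(t−r)|ξ|²} dr ≤ (3/2)(t−s). -/
/-!
Write `a = |ξ|²`. On `[0, s]` both kernels are present and the integrand factors as
`e^{-(s-r)a} (e^{-(t-s)a/2} - 1)²`, while on `(s, t]` only the first one is; this gives the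
equivalence of the two forms. Then `(e^{-x} - 1)² ≤ x` bounds the square by `(t-s)a/2`, and
`a ∫₀ˢ e^{-(s-r)a} dr = 1 - e^{-sa} ≤ 1` absorbs the factor `a`, so the first integral is at most
`(t-s)/2`; the second is at most `t - s` since its integrand is at most `1`.
-/

open MeasureTheory Real Set

lemma sq_exp_neg_sub_one_le {x : ℝ} (hx : 0 ≤ x) : (exp (-x) - 1) ^ 2 ≤ x := by
  have h1 : -x + 1 ≤ exp (-x) := add_one_le_exp _
  have h2 : exp (-x) ≤ 1 := exp_le_one_iff.mpr (neg_nonpos.mpr hx)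
  nlinarith [exp_pos (-x)]

lemma integral_mul_exp_neg_sub_mul (a s : ℝ) :
    ∫ r in (0 : ℝ)..s, a * exp (-(s - r) * a) = 1 - exp (-(s * a)) := by
  have hderiv : ∀ r, HasDerivAt (fun r => exp (-(s - r) * a)) (a * exp (-(s - r) * a)) r := by
    intro r
    have := (((hasDerivAt_id r).const_sub s).neg.mul_const a).exp
    simpa [mul_comm] using this
  rw [intervalIntegral.integral_eq_sub_of_hasDerivAt (fun r _ => hderiv r)
    (Continuous.intervalIntegrable (by fun_prop) _ _)]
  simp

lemma integral_exp_neg_sub_mul_le {a s t : ℝ} (ha : 0 ≤ a) (hst : s ≤ t) :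
    ∫ r in s..t, exp (-(t - r) * a) ≤ t - s := by
  calc ∫ r in s..t, exp (-(t - r) * a) ≤ ∫ _ in s..t, (1 : ℝ) :=
        intervalIntegral.integral_mono_on hst (Continuous.intervalIntegrable (by fun_prop) _ _)
          intervalIntegrable_const fun r hr =>
            exp_le_one_iff.mpr (mul_nonpos_of_nonpos_of_nonneg (by linarith [hr.2]) ha)
    _ = t - s := by simp

namespace StochasticHeat

noncomputable def expKernel (a t r : ℝ) : ℝ :=
  exp (-(t - r) * a / 2) * (Icc (0 : ℝ) t).indicator 1 r

lemma expKernel_of_mem {a t r : ℝ} (hr : r ∈ Icc 0 t) :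
    expKernel a t r = exp (-(t - r) * a / 2) := by
  simp [expKernel, indicator_of_mem hr]

lemma expKernel_of_lt {a t r : ℝ} (hr : t < r) : expKernel a t r = 0 := by
  simp [expKernel, indicator_of_notMem (fun h : r ∈ Icc 0 t => hr.not_ge h.2)]

lemma sq_expKernel_sub_expKernel_of_mem {a s t r : ℝ} (hst : s ≤ t) (hr : r ∈ Icc 0 s) :
    (expKernel a t r - expKernel a s r) ^ 2
      = exp (-(s - r) * a) * (exp (-(t - s) * a / 2) - 1) ^ 2 := by
  have hmul : exp (-(t - r) * a / 2) = exp (-(s - r) * a / 2) * exp (-(t - s) * a / 2) := by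
    rw [← exp_add]; ring_nf
  have hsq : exp (-(s - r) * a) = exp (-(s - r) * a / 2) ^ 2 := by
    rw [← exp_nat_mul]; ring_nf
  rw [expKernel_of_mem ⟨hr.1, hr.2.trans hst⟩, expKernel_of_mem hr, hmul, hsq]
  ring

lemma sq_expKernel_sub_expKernel_of_mem_Ioc {a s t r : ℝ} (hs : 0 ≤ s) (hr : r ∈ Ioc s t) :
    (expKernel a t r - expKernel a s r) ^ 2 = exp (-(t - r) * a) := by
  have hsq : exp (-(t - r) * a) = exp (-(t - r) * a / 2) ^ 2 := by
    rw [← exp_nat_mul]; ring_nf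
  rw [expKernel_of_mem ⟨hs.trans hr.1.le, hr.2⟩, expKernel_of_lt hr.1, hsq, sub_zero]

theorem integral_sq_expKernel_sub_expKernel (a : ℝ) {s t : ℝ} (hs : 0 ≤ s) (hst : s ≤ t) :
    ∫ r in (0 : ℝ)..t, (expKernel a t r - expKernel a s r) ^ 2
      = (∫ r in (0 : ℝ)..s, exp (-(s - r) * a) * (exp (-(t - s) * a / 2) - 1) ^ 2)
        + ∫ r in s..t, exp (-(t - r) * a) := by
  set F : ℝ → ℝ := fun r => (expKernel a t r - expKernel a s r) ^ 2
  have eq_left : EqOn F (fun r => exp (-(s - r) * a) * (exp (-(t - s) * a / 2) - 1) ^ 2)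
      (uIcc 0 s) := by
    intro r hr
    rw [uIcc_of_le hs] at hr
    exact sq_expKernel_sub_expKernel_of_mem hst hr
  have eq_right : ∀ r ∈ uIoc s t, F r = exp (-(t - r) * a) := by
    intro r hr
    rw [uIoc_of_le hst] at hr
    exact sq_expKernel_sub_expKernel_of_mem_Ioc hs hr
  have int_left : IntervalIntegrable F volume 0 s :=
    (intervalIntegrable_congr fun r hr => eq_left (uIoc_subset_uIcc hr)).mpr
      (Continuous.intervalIntegrable (by fun_prop) _ _)
  have int_right : IntervalIntegrable F volume s t :=
    (intervalIntegrable_congr eq_right).mpr (Continuous.intervalIntegrable (by fun_prop) _ _)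
  rw [← intervalIntegral.integral_add_adjacent_intervals int_left int_right,
    intervalIntegral.integral_congr eq_left,
    intervalIntegral.integral_congr_ae (ae_of_all _ eq_right)]

theorem integral_exp_mul_sq_add_integral_exp_le {a s t : ℝ} (ha : 0 ≤ a) (hs : 0 ≤ s)
    (hst : s ≤ t) :
    (∫ r in (0 : ℝ)..s, exp (-(s - r) * a) * (exp (-(t - s) * a / 2) - 1) ^ 2)
        + (∫ r in s..t, exp (-(t - r) * a)) ≤ 3 / 2 * (t - s) := by
  set I := ∫ r in (0 : ℝ)..s, exp (-(s - r) * a)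
  have hC : (exp (-(t - s) * a / 2) - 1) ^ 2 ≤ (t - s) * a / 2 := by
    simpa only [neg_mul, neg_div] using
      sq_exp_neg_sub_one_le (by have := sub_nonneg.mpr hst; positivity)
  have hI_nonneg : 0 ≤ I := intervalIntegral.integral_nonneg hs fun _ _ => (exp_pos _).le
  have haI : a * I = 1 - exp (-(s * a)) := by
    rw [← intervalIntegral.integral_const_mul, integral_mul_exp_neg_sub_mul]
  have hleft : I * (exp (-(t - s) * a / 2) - 1) ^ 2 ≤ (t - s) / 2 :=
    calc I * (exp (-(t - s) * a / 2) - 1) ^ 2 ≤ I * ((t - s) * a / 2) := by gcongr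
      _ = (t - s) / 2 * (a * I) := by ring
      _ ≤ (t - s) / 2 * 1 := by
        rw [haI]; gcongr; linarith [exp_pos (-(s * a))]
      _ = (t - s) / 2 := mul_one _
  rw [intervalIntegral.integral_mul_const]
  linarith [integral_exp_neg_sub_mul_le ha hst]

end StochasticHeat

theorem stmt12_general (s t : ℝ) (hs : 0 ≤ s) (hst : s ≤ t)
    (ξ : EuclideanSpace ℝ (Fin 2)) :
    (∫ r in (0:ℝ)..t,
        (Real.exp (-(t - r) * ‖ξ‖ ^ 2 / 2) * (Set.Icc (0:ℝ) t).indicator 1 r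
          - Real.exp (-(s - r) * ‖ξ‖ ^ 2 / 2) * (Set.Icc (0:ℝ) s).indicator 1 r) ^ 2)
      ≤ 3 / 2 * (t - s) ∧
    (∫ r in (0:ℝ)..s,
        Real.exp (-(s - r) * ‖ξ‖ ^ 2) * (Real.exp (-(t - s) * ‖ξ‖ ^ 2 / 2) - 1) ^ 2)
        + (∫ r in s..t, Real.exp (-(t - r) * ‖ξ‖ ^ 2))
      ≤ 3 / 2 * (t - s) := by
  have hbound := StochasticHeat.integral_exp_mul_sq_add_integral_exp_le (sq_nonneg ‖ξ‖) hs hst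
  refine ⟨?_, hbound⟩
  change ∫ r in (0 : ℝ)..t,
    (StochasticHeat.expKernel _ t r - StochasticHeat.expKernel _ s r) ^ 2 ≤ _
  rwa [StochasticHeat.integral_sq_expKernel_sub_expKernel _ hs hst]

/-- For all `0 ≤ s ≤ t` and every nonzero `ξ ∈ ℝ²`,
`∫₀ᵗ (e^{−(t−r)|ξ|²/2} 1_{[0,t]}(r) − e^{−(s−r)|ξ|²/2} 1_{[0,s]}(r))² dr ≤ (3/2)(t−s)`;
equivalently,
`∫₀ˢ e^{−(s−r)|ξ|²} (e^{−(t−s)|ξ|²/2} − 1)² dr + ∫ₛᵗ e^{−(t−r)|ξ|²} dr ≤ (3/2)(t−s)`. -/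
theorem stmt12 (s t : ℝ) (hs : 0 ≤ s) (hst : s ≤ t)
    (ξ : EuclideanSpace ℝ (Fin 2)) (hξ : ξ ≠ 0) :
    (∫ r in (0:ℝ)..t,
        (Real.exp (-(t - r) * ‖ξ‖ ^ 2 / 2) * (Set.Icc (0:ℝ) t).indicator 1 r
          - Real.exp (-(s - r) * ‖ξ‖ ^ 2 / 2) * (Set.Icc (0:ℝ) s).indicator 1 r) ^ 2)
      ≤ 3 / 2 * (t - s) ∧
    (∫ r in (0:ℝ)..s,
        Real.exp (-(s - r) * ‖ξ‖ ^ 2) * (Real.exp (-(t - s) * ‖ξ‖ ^ 2 / 2) - 1) ^ 2)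
        + (∫ r in s..t, Real.exp (-(t - r) * ‖ξ‖ ^ 2))
      ≤ 3 / 2 * (t - s) :=
  stmt12_general s t hs hst ξ
end
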